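/- Let S be a decision rule system with n(S) > 0. Then max{d(S), β_AR(S)} ≤ h_AR(S) ≤ d(S)·β_AR⁺(S). -/

import Mathlib

/- Common formal framework for decision rule systems and decision trees /
   acyclic decision graphs, following Durdymyradov & Moshkov. -/

attribute [local instance] Classical.propDecidable

noncomputable section

namespace DRS

/-- A decision rule `(a_{i₁}=δ₁) ∧ ⋯ ∧ (a_{i_m}=δ_m) → σ`:
`K` is the finite set of equations (attribute index, value), `rhs` is σ. -/
structure Rule where
  K : Finset (ℕ × ℕ)
  rhs : ℕ

/-- Well-formedness of a rule: the attributes on its left-hand side are pairwise different. -/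
def Rule.WF (r : Rule) : Prop := ∀ p ∈ r.K, ∀ q ∈ r.K, p.1 = q.1 → p = q

/-- A(r): the set of attributes of a rule. -/
def Rule.attrs (r : Rule) : Finset ℕ := r.K.image Prod.fst

/-- The length m of a rule. -/
def Rule.len (r : Rule) : ℕ := r.K.card

/-- A(S) -/
def attrs (S : Finset Rule) : Finset ℕ := S.biUnion Rule.attrs

/-- n(S) -/
def nPar (S : Finset Rule) : ℕ := (attrs S).card

/-- d(S): the maximum length of a rule of S. -/
def dPar (S : Finset Rule) : ℕ := S.sup Rule.len

/-- D(S): the set of right-hand sides. -/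
def rhsSet (S : Finset Rule) : Finset ℕ := S.image Rule.rhs

/-- V_S(a_i) -/
def VS (S : Finset Rule) (i : ℕ) : Finset ℕ :=
  ((S.biUnion Rule.K).filter fun p => p.1 = i).image Prod.snd

/-- k(S) -/
def kPar (S : Finset Rule) : ℕ := (attrs S).sup fun i => (VS S i).card

/-- Attribute values in trees are `Option ℕ`; `none` plays the role of the special value `*`.
`allowed S false i` is (the lift of) `V_S(a_i)`, and `allowed S true i` is `EV_S(a_i)`. -/
def allowed (S : Finset Rule) (ext : Bool) (i : ℕ) : Finset (Option ℕ) :=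
  (VS S i).image some ∪ (if ext then {none} else ∅)

/-- Consistency of an equation system over ω ∪ {*}. -/
def ConsistentE (E : Finset (ℕ × Option ℕ)) : Prop :=
  ∀ p ∈ E, ∀ q ∈ E, p.1 = q.1 → p.2 = q.2

/-- Lift the left-hand side of a rule to an equation system over ω ∪ {*}. -/
def liftK (K : Finset (ℕ × ℕ)) : Finset (ℕ × Option ℕ) :=
  K.image fun p => (p.1, some p.2)

/-- A finite directed labeled graph: the nodes are `0, …, n-1`, with a distinguished root,
each node carries either an attribute (working node) or a set of rules (terminal node),
and edges are labeled with elements of ω ∪ {*}. -/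
structure DGraph where
  n : ℕ
  root : ℕ
  label : ℕ → ℕ ⊕ Finset Rule
  edges : Finset (ℕ × Option ℕ × ℕ)

namespace DGraph

def step (G : DGraph) (u v : ℕ) : Prop := ∃ l, (u, l, v) ∈ G.edges

/-- The graph has no directed cycles. -/
def Acyclic (G : DGraph) : Prop := ∀ v, ¬ Relation.TransGen G.step v v

/-- A node is terminal if no edge leaves it. -/
def IsTerminal (G : DGraph) (v : ℕ) : Prop := ∀ e ∈ G.edges, e.1 ≠ v

/-- The set of rules attached to a (terminal) node. -/
def termSet (G : DGraph) (v : ℕ) : Finset Rule :=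
  Sum.elim (fun _ => (∅ : Finset Rule)) id (G.label v)

/-- `G` is an acyclic decision graph over the rule system `S`;
`ext = false` : branching over `V_S` (o-type), `ext = true` : branching over `EV_S` (e-type).
Terminal nodes are labeled with subsets of S; each working node is labeled with an
attribute `a` of `A(S)` and has exactly one leaving edge for every element of
`V_S(a)` (resp. `EV_S(a)`), the edges leaving it being labeled with these
pairwise different elements. -/
def IsDG (G : DGraph) (S : Finset Rule) (ext : Bool) : Prop :=
  G.root < G.n ∧
  (∀ e ∈ G.edges, e.1 < G.n ∧ e.2.2 < G.n) ∧
  G.Acyclic ∧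
  (∀ v < G.n,
    if G.IsTerminal v then
      ∃ Z : Finset Rule, G.label v = Sum.inr Z ∧ Z ⊆ S
    else
      ∃ a : ℕ, G.label v = Sum.inl a ∧ a ∈ attrs S ∧
        (∀ l : Option ℕ, (∃ w, (v, l, w) ∈ G.edges) ↔ l ∈ allowed S ext a) ∧
        (∀ l w w', (v, l, w) ∈ G.edges → (v, l, w') ∈ G.edges → w = w'))

/-- `G` is a finite directed tree with root: the root has no entering edge and every
other node has exactly one entering edge (together with acyclicity this makes the
graph a rooted tree). -/
def IsTree (G : DGraph) : Prop :=
  (∀ e ∈ G.edges, e.2.2 ≠ G.root) ∧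
  (∀ v < G.n, v ≠ G.root → ∃! e, e ∈ G.edges ∧ e.2.2 = v)

/-- `chainFrom G v p t`: the list `p` of (node, leaving-edge-label) pairs forms a
directed path in `G` starting at `v` and ending at `t`. -/
def chainFrom (G : DGraph) : ℕ → List (ℕ × Option ℕ) → ℕ → Prop
  | v, [], t => v = t
  | v, e :: rest, t => e.1 = v ∧ ∃ w, (v, e.2, w) ∈ G.edges ∧ chainFrom G w rest t

/-- A complete path: from the root to a terminal node; it is recorded by the list of
its working nodes with the labels of the edges taken, together with its terminal node. -/
def IsCompletePath (G : DGraph) (p : List (ℕ × Option ℕ)) (t : ℕ) : Prop :=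
  G.chainFrom G.root p t ∧ G.IsTerminal t ∧ t < G.n

/-- K(ξ): the equation system associated with a complete path. -/
def pathEqs (G : DGraph) (p : List (ℕ × Option ℕ)) : Finset (ℕ × Option ℕ) :=
  (p.filterMap fun e =>
    Sum.elim (fun a => some (a, e.2)) (fun _ => none) (G.label e.1)).toFinset

/-- L(Γ): the number of nodes. -/
def size (G : DGraph) : ℕ := G.n

/-- T(Γ): the number of terminal nodes labeled with pairwise different sets of rules. -/
def tCount (G : DGraph) : ℕ :=
  (((Finset.range G.n).filter fun v => G.IsTerminal v).image fun v => G.termSet v).card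

/-- h(Γ): the maximum number of working nodes on a complete path. -/
def depth (G : DGraph) : ℕ :=
  sSup {m | ∃ p t, G.IsCompletePath p t ∧ p.length = m}

/-- Path conditions for (the solutions of) the problems All Rules / EAll Rules. -/
def SolvesAR (G : DGraph) (S : Finset Rule) : Prop :=
  ∀ p t, G.IsCompletePath p t → ConsistentE (G.pathEqs p) →
    (∀ r ∈ G.termSet t, liftK r.K ⊆ G.pathEqs p) ∧
    (∀ r ∈ S, r ∉ G.termSet t → ¬ ConsistentE (liftK r.K ∪ G.pathEqs p))

/-- Path conditions for the problems All Decisions / EAll Decisions. -/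
def SolvesAD (G : DGraph) (S : Finset Rule) : Prop :=
  ∀ p t, G.IsCompletePath p t → ConsistentE (G.pathEqs p) →
    (∀ r ∈ G.termSet t, liftK r.K ⊆ G.pathEqs p) ∧
    (∀ r ∈ S, r ∉ G.termSet t → r.rhs ∉ (G.termSet t).image Rule.rhs →
      ¬ ConsistentE (liftK r.K ∪ G.pathEqs p))

/-- Path conditions for the problems Some Rules / ESome Rules. -/
def SolvesSR (G : DGraph) (S : Finset Rule) : Prop :=
  ∀ p t, G.IsCompletePath p t → ConsistentE (G.pathEqs p) →
    (∀ r ∈ G.termSet t, liftK r.K ⊆ G.pathEqs p) ∧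
    (G.termSet t = ∅ → ∀ r ∈ S, ¬ ConsistentE (liftK r.K ∪ G.pathEqs p))

end DGraph

/-- Γ is a decision tree over S solving AR(S) (an o-tree). -/
def TreeSolvesAR (S : Finset Rule) (G : DGraph) : Prop :=
  G.IsDG S false ∧ G.IsTree ∧ G.SolvesAR S
/-- Γ is a decision tree over S solving EAR(S) (an e-tree). -/
def TreeSolvesEAR (S : Finset Rule) (G : DGraph) : Prop :=
  G.IsDG S true ∧ G.IsTree ∧ G.SolvesAR S
/-- Γ is a decision tree over S solving AD(S) (an o-tree). -/
def TreeSolvesAD (S : Finset Rule) (G : DGraph) : Prop :=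
  G.IsDG S false ∧ G.IsTree ∧ G.SolvesAD S
/-- Γ is a decision tree over S solving EAD(S) (an e-tree). -/
def TreeSolvesEAD (S : Finset Rule) (G : DGraph) : Prop :=
  G.IsDG S true ∧ G.IsTree ∧ G.SolvesAD S
/-- Γ is a decision tree over S solving SR(S) (an o-tree). -/
def TreeSolvesSR (S : Finset Rule) (G : DGraph) : Prop :=
  G.IsDG S false ∧ G.IsTree ∧ G.SolvesSR S
/-- Γ is a decision tree over S solving ESR(S) (an e-tree). -/
def TreeSolvesESR (S : Finset Rule) (G : DGraph) : Prop :=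
  G.IsDG S true ∧ G.IsTree ∧ G.SolvesSR S

/-- L_AR(S): minimum number of nodes of a decision tree over S solving AR(S). -/
def L_AR (S : Finset Rule) : ℕ := sInf {m | ∃ G : DGraph, TreeSolvesAR S G ∧ G.size = m}
def L_EAR (S : Finset Rule) : ℕ := sInf {m | ∃ G : DGraph, TreeSolvesEAR S G ∧ G.size = m}
def L_AD (S : Finset Rule) : ℕ := sInf {m | ∃ G : DGraph, TreeSolvesAD S G ∧ G.size = m}
def L_EAD (S : Finset Rule) : ℕ := sInf {m | ∃ G : DGraph, TreeSolvesEAD S G ∧ G.size = m}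
def L_SR (S : Finset Rule) : ℕ := sInf {m | ∃ G : DGraph, TreeSolvesSR S G ∧ G.size = m}
def L_ESR (S : Finset Rule) : ℕ := sInf {m | ∃ G : DGraph, TreeSolvesESR S G ∧ G.size = m}

/-- T_AR(S): minimum number of differently-labeled terminal nodes of a decision tree
over S solving AR(S); similarly for the other problems. -/
def T_AR (S : Finset Rule) : ℕ := sInf {m | ∃ G : DGraph, TreeSolvesAR S G ∧ G.tCount = m}
def T_EAR (S : Finset Rule) : ℕ := sInf {m | ∃ G : DGraph, TreeSolvesEAR S G ∧ G.tCount = m}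
def T_AD (S : Finset Rule) : ℕ := sInf {m | ∃ G : DGraph, TreeSolvesAD S G ∧ G.tCount = m}
def T_EAD (S : Finset Rule) : ℕ := sInf {m | ∃ G : DGraph, TreeSolvesEAD S G ∧ G.tCount = m}
def T_SR (S : Finset Rule) : ℕ := sInf {m | ∃ G : DGraph, TreeSolvesSR S G ∧ G.tCount = m}
def T_ESR (S : Finset Rule) : ℕ := sInf {m | ∃ G : DGraph, TreeSolvesESR S G ∧ G.tCount = m}

/-- h_AR(S): minimum depth of a decision tree over S solving AR(S); similarly for the others. -/
def h_AR (S : Finset Rule) : ℕ := sInf {m | ∃ G : DGraph, TreeSolvesAR S G ∧ G.depth = m}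
def h_EAR (S : Finset Rule) : ℕ := sInf {m | ∃ G : DGraph, TreeSolvesEAR S G ∧ G.depth = m}
def h_AD (S : Finset Rule) : ℕ := sInf {m | ∃ G : DGraph, TreeSolvesAD S G ∧ G.depth = m}
def h_EAD (S : Finset Rule) : ℕ := sInf {m | ∃ G : DGraph, TreeSolvesEAD S G ∧ G.depth = m}
def h_SR (S : Finset Rule) : ℕ := sInf {m | ∃ G : DGraph, TreeSolvesSR S G ∧ G.depth = m}
def h_ESR (S : Finset Rule) : ℕ := sInf {m | ∃ G : DGraph, TreeSolvesESR S G ∧ G.depth = m}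

/-- L^DG_SR(S): minimum number of nodes of an acyclic decision graph solving SR(S). -/
def LDG_SR (S : Finset Rule) : ℕ :=
  sInf {m | ∃ G : DGraph, G.IsDG S false ∧ G.SolvesSR S ∧ G.size = m}
/-- L^DG_ESR(S): minimum number of nodes of an acyclic decision graph solving ESR(S). -/
def LDG_ESR (S : Finset Rule) : ℕ :=
  sInf {m | ∃ G : DGraph, G.IsDG S true ∧ G.SolvesSR S ∧ G.size = m}

/-- A node cover of the hypergraph G(S). -/
def IsNodeCover (S : Finset Rule) (B : Finset ℕ) : Prop :=
  B ⊆ attrs S ∧ ∀ r ∈ S, (Rule.attrs r).Nonempty → (Rule.attrs r ∩ B).Nonempty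

/-- β(S): the minimum cardinality of a node cover of the hypergraph G(S). -/
def beta (S : Finset Rule) : ℕ := sInf {c | ∃ B, IsNodeCover S B ∧ B.card = c}

/-- S⁺: the subsystem of S consisting of all rules of length d(S). -/
def Splus (S : Finset Rule) : Finset Rule := S.filter fun r => r.len = dPar S

/-- β⁺(S) = β(S⁺). -/
def betaPlus (S : Finset Rule) : ℕ := beta (Splus S)

/-- The rule r_α : delete from the left-hand side of r all equations belonging to α. -/
def Rule.restrict (r : Rule) (α : Finset (ℕ × Option ℕ)) : Rule :=
  ⟨r.K.filter fun p => (p.1, some p.2) ∉ α, r.rhs⟩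

/-- S_α : the system of the rules r_α for all r ∈ S with K(r) ∪ α consistent. -/
def restrict (S : Finset Rule) (α : Finset (ℕ × Option ℕ)) : Finset Rule :=
  (S.filter fun r => ConsistentE (liftK r.K ∪ α)).image fun r => r.restrict α

/-- E_C(S): consistent equation systems whose attributes are in A(S) and whose
values belong to V_S (ext = false) resp. EV_S (ext = true). -/
def ESys (S : Finset Rule) (ext : Bool) : Set (Finset (ℕ × Option ℕ)) :=
  {α | ConsistentE α ∧ ∀ p ∈ α, p.1 ∈ attrs S ∧ p.2 ∈ allowed S ext p.1}

/-- I_SR(S). -/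
def I_SR (S : Finset Rule) : Finset Rule :=
  if ∃ r ∈ S, r.len = 0 then S.filter fun r => r.len = 0 else S

/-- D₀(S): the right-hand sides of the rules of S of length 0. -/
def D0 (S : Finset Rule) : Finset ℕ := (S.filter fun r => r.len = 0).image Rule.rhs

/-- I_AD(S). -/
def I_AD (S : Finset Rule) : Finset Rule :=
  S.filter fun r => r.len = 0 ∨ r.rhs ∉ D0 S

def betaC (S : Finset Rule) (ext : Bool) : ℕ :=
  sSup {b | ∃ α ∈ ESys S ext, beta (restrict S α) = b}
def betaCplus (S : Finset Rule) (ext : Bool) : ℕ :=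
  sSup {b | ∃ α ∈ ESys S ext, betaPlus (restrict S α) = b}
def betaI (S : Finset Rule) (I : Finset Rule → Finset Rule) : ℕ :=
  sSup {b | ∃ α ∈ ESys S true, beta (I (restrict S α)) = b}
def betaIplus (S : Finset Rule) (I : Finset Rule → Finset Rule) : ℕ :=
  sSup {b | ∃ α ∈ ESys S true, betaPlus (I (restrict S α)) = b}

def beta_AR (S : Finset Rule) : ℕ := betaC S false
def beta_AD (S : Finset Rule) : ℕ := betaC S false
def beta_SR (S : Finset Rule) : ℕ := betaC S false
def beta_EAR (S : Finset Rule) : ℕ := betaC S true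
def beta_ARplus (S : Finset Rule) : ℕ := betaCplus S false
def beta_ADplus (S : Finset Rule) : ℕ := betaCplus S false
def beta_SRplus (S : Finset Rule) : ℕ := betaCplus S false
def beta_EARplus (S : Finset Rule) : ℕ := betaCplus S true
def beta_EAD (S : Finset Rule) : ℕ := betaI S I_AD
def beta_EADplus (S : Finset Rule) : ℕ := betaIplus S I_AD
def beta_ESR (S : Finset Rule) : ℕ := betaI S I_SR
def beta_ESRplus (S : Finset Rule) : ℕ := betaIplus S I_SR

/-- R_SR(S). -/
def R_SR (S : Finset Rule) : Finset Rule :=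
  S.filter fun r => ¬ ∃ r' ∈ S, r'.K ⊂ r.K

/-- R_AD(S). -/
def R_AD (S : Finset Rule) : Finset Rule :=
  S.filter fun r => ¬ ∃ r' ∈ S, r'.K ⊂ r.K ∧ r'.rhs = r.rhs

/-- A reduced decision rule system. -/
def Reduced (S : Finset Rule) : Prop :=
  attrs S ⊆ Finset.range (nPar S + 1) ∧
  rhsSet S ⊆ Finset.range ((rhsSet S).card + 1) ∧
  (∀ i ∈ attrs S, VS S i ⊆ Finset.range (kPar S + 1)) ∧
  1 ≤ dPar S

/-- Length of the binary representation of a natural number. -/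
def bitLen (m : ℕ) : ℕ := max 1 (Nat.size m)

/-- The length of the word "(a⟨i⟩=⟨δ⟩)" encoding one equation. -/
def eqLen (p : ℕ × ℕ) : ℕ := 4 + bitLen p.1 + bitLen p.2

/-- The length of the word encoding one rule (with the "∧" signs and "→"). -/
def Rule.wordLen (r : Rule) : ℕ :=
  (∑ p ∈ r.K, eqLen p) + (r.K.card - 1) + 1 + bitLen r.rhs

/-- size(S): the length of the word representing S (with ";" separating the rules). -/
def sizeS (S : Finset Rule) : ℕ := (∑ r ∈ S, r.wordLen) + (S.card - 1)

/-
Lower bound: given an o-tree solving AR(S) and α ∈ E_AR(S), extend α to an assignment of values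
to all attributes and follow it from the root. The complete path ξ reached is consistent, so every
rule consistent with ξ must be fully recorded on ξ, and every other rule contradicts ξ at a queried
attribute. For α = K(r) with r a longest rule this gives d(S) ≤ |ξ|; in general the attributes
queried on ξ cover the hypergraph G(S_α), which gives β(S_α) ≤ |ξ|.

Upper bound: query the attributes of a minimum node cover of G((S_α)⁺), at most β_AR⁺(S) of them.
Whatever the answers α', every rule of S_α' is shorter than d(S_α), so after d(S) such rounds all
surviving rules have empty left-hand sides and a leaf can list exactly the rules consistent with
the answers.
-/

lemma mem_VS {S : Finset Rule} {r : Rule} {a δ : ℕ} (hr : r ∈ S) (h : (a, δ) ∈ r.K) :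
    δ ∈ VS S a := by
  simp only [VS, Finset.mem_image, Finset.mem_filter, Finset.mem_biUnion]
  exact ⟨(a, δ), ⟨⟨r, hr, h⟩, rfl⟩, rfl⟩

lemma VS_nonempty {S : Finset Rule} {a : ℕ} (h : a ∈ attrs S) : (VS S a).Nonempty := by
  simp only [attrs, Finset.mem_biUnion, Rule.attrs, Finset.mem_image] at h
  obtain ⟨r, hr, ⟨b, δ⟩, hbδ, rfl⟩ := h
  exact ⟨δ, mem_VS hr hbδ⟩

lemma mem_allowed_false {S : Finset Rule} {a : ℕ} {l : Option ℕ} :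
    l ∈ allowed S false a ↔ ∃ δ ∈ VS S a, l = some δ := by
  simp [allowed, eq_comm]

lemma mem_liftK {K : Finset (ℕ × ℕ)} {q : ℕ × ℕ} (hq : q ∈ K) : (q.1, some q.2) ∈ liftK K :=
  Finset.mem_image_of_mem _ hq

lemma card_liftK (K : Finset (ℕ × ℕ)) : (liftK K).card = K.card :=
  Finset.card_image_of_injective _ fun p q h => by
    simp only [Prod.mk.injEq, Option.some_inj] at h
    exact Prod.ext h.1 h.2

lemma ConsistentE.mono {E F : Finset (ℕ × Option ℕ)} (h : E ⊆ F) (hF : ConsistentE F) :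
    ConsistentE E :=
  fun p hp q hq => hF p (h hp) q (h hq)

lemma ConsistentE.union {E F : Finset (ℕ × Option ℕ)} (hE : ConsistentE E) (hF : ConsistentE F)
    (hEF : ∀ p ∈ E, ∀ q ∈ F, p.1 = q.1 → p.2 = q.2) : ConsistentE (E ∪ F) := by
  intro p hp q hq hpq
  rcases Finset.mem_union.1 hp with hp | hp <;> rcases Finset.mem_union.1 hq with hq | hq
  · exact hE p hp q hq hpq
  · exact hEF p hp q hq hpq
  · exact (hEF q hq p hp hpq.symm).symm
  · exact hF p hp q hq hpq

lemma Rule.WF.consistentE_liftK {r : Rule} (hwf : r.WF) : ConsistentE (liftK r.K) := by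
  simp only [ConsistentE, liftK, Finset.mem_image]
  rintro _ ⟨p, hp, rfl⟩ _ ⟨q, hq, rfl⟩ hpq
  rw [hwf p hp q hq hpq]

lemma Rule.mem_attrs_restrict {r : Rule} {α : Finset (ℕ × Option ℕ)} {q : ℕ × ℕ} (hq : q ∈ r.K)
    (hqα : (q.1, some q.2) ∉ α) : q.1 ∈ (r.restrict α).attrs :=
  Finset.mem_image_of_mem _ (Finset.mem_filter.2 ⟨hq, hqα⟩)

lemma attrs_mono {T T' : Finset Rule} (h : T ⊆ T') : attrs T ⊆ attrs T' :=
  Finset.biUnion_subset_biUnion_of_subset_left _ h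

lemma attrs_restrict_subset (S : Finset Rule) (α : Finset (ℕ × Option ℕ)) :
    attrs (restrict S α) ⊆ attrs S := by
  simp only [attrs, restrict, Finset.biUnion_subset, Finset.forall_mem_image]
  intro r hr
  exact (Finset.image_subset_image (Finset.filter_subset _ _)).trans
    (Finset.subset_biUnion_of_mem Rule.attrs (Finset.mem_filter.1 hr).1)

lemma len_restrict_le_dPar {S : Finset Rule} {α : Finset (ℕ × Option ℕ)} {r : Rule} (hr : r ∈ S)
    (hcons : ConsistentE (liftK r.K ∪ α)) : (r.restrict α).len ≤ dPar (restrict S α) :=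
  Finset.le_sup (Finset.mem_image_of_mem _ (Finset.mem_filter.2 ⟨hr, hcons⟩))

lemma dPar_restrict_empty_le (S : Finset Rule) : dPar (restrict S ∅) ≤ dPar S := by
  simp only [dPar, restrict, Finset.sup_image, Finset.sup_le_iff, Finset.mem_filter]
  exact fun r hr => (Finset.card_filter_le _ _).trans (Finset.le_sup (f := Rule.len) hr.1)

lemma empty_mem_ESys (S : Finset Rule) : ∅ ∈ ESys S false :=
  ⟨fun _ h => absurd h (Finset.notMem_empty _), fun _ h => absurd h (Finset.notMem_empty _)⟩

lemma liftK_mem_ESys {S : Finset Rule} {r : Rule} (hr : r ∈ S) (hwf : r.WF) :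
    liftK r.K ∈ ESys S false := by
  refine ⟨hwf.consistentE_liftK, ?_⟩
  simp only [liftK, Finset.forall_mem_image]
  exact fun q hq => ⟨Finset.subset_biUnion_of_mem _ hr (Finset.mem_image_of_mem _ hq),
    mem_allowed_false.2 ⟨q.2, mem_VS hr hq, rfl⟩⟩

lemma insert_mem_ESys {S : Finset Rule} {α : Finset (ℕ × Option ℕ)} {b δ : ℕ}
    (hα : α ∈ ESys S false) (hb : b ∈ attrs S) (hδ : δ ∈ VS S b) (hfree : ∀ x, (b, some x) ∉ α) :
    insert (b, some δ) α ∈ ESys S false := by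
  obtain ⟨hcons, hmem⟩ := hα
  have hnew : ∀ q ∈ α, q.1 ≠ b := fun q hq hqb => by
    obtain ⟨x, -, hx⟩ := mem_allowed_false.1 (hmem q hq).2
    exact hfree x (by rw [← hqb, ← hx]; exact hq)
  refine ⟨?_, ?_⟩
  · rw [Finset.insert_eq]
    refine ConsistentE.union (fun p hp q hq _ => by simp_all) hcons ?_
    intro p hp q hq hpq
    rw [Finset.mem_singleton.1 hp] at hpq
    exact absurd hpq.symm (hnew q hq)
  · simp only [Finset.forall_mem_insert]
    exact ⟨⟨hb, mem_allowed_false.2 ⟨δ, hδ, rfl⟩⟩, hmem⟩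

def Agrees (E : Finset (ℕ × Option ℕ)) (f : ℕ → ℕ) : Prop := ∀ q ∈ E, q.2 = some (f q.1)

lemma Agrees.consistentE {E : Finset (ℕ × Option ℕ)} {f : ℕ → ℕ} (h : Agrees E f) :
    ConsistentE E :=
  fun p hp q hq hpq => by rw [h p hp, h q hq, hpq]

lemma exists_agrees_of_mem_ESys {S : Finset Rule} {α : Finset (ℕ × Option ℕ)}
    (hα : α ∈ ESys S false) :
    ∃ f : ℕ → ℕ, (∀ a ∈ attrs S, f a ∈ VS S a) ∧ Agrees α f := by
  obtain ⟨hcons, hmem⟩ := hα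
  have : ∀ a, ∃ δ, (a ∈ attrs S → δ ∈ VS S a) ∧ ∀ x, (a, x) ∈ α → x = some δ := by
    intro a
    by_cases h : ∃ δ, (a, some δ) ∈ α
    · obtain ⟨δ, hδ⟩ := h
      obtain ⟨δ', hδ', hδδ'⟩ := mem_allowed_false.1 (hmem _ hδ).2
      refine ⟨δ, fun _ => Option.some_inj.1 hδδ' ▸ hδ', fun x hx => hcons _ hx _ hδ rfl⟩
    · by_cases ha : a ∈ attrs S
      · obtain ⟨δ, hδ⟩ := VS_nonempty ha
        refine ⟨δ, fun _ => hδ, fun x hx => ?_⟩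
        obtain ⟨x', -, rfl⟩ := mem_allowed_false.1 (hmem _ hx).2
        exact absurd ⟨x', hx⟩ h
      · exact ⟨0, fun h' => absurd h' ha, fun x hx => absurd (hmem _ hx).1 ha⟩
  choose f hfS hfα using this
  exact ⟨f, hfS, fun q hq => hfα q.1 q.2 hq⟩

lemma isNodeCover_attrs (T : Finset Rule) : IsNodeCover T (attrs T) :=
  ⟨subset_rfl, fun _ hr ⟨a, ha⟩ =>
    ⟨a, Finset.mem_inter.2 ⟨ha, Finset.subset_biUnion_of_mem _ hr ha⟩⟩⟩

lemma exists_isNodeCover_card_eq_beta (T : Finset Rule) :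
    ∃ B, IsNodeCover T B ∧ B.card = beta T :=
  Nat.sInf_mem (s := {c | ∃ B, IsNodeCover T B ∧ B.card = c})
    ⟨_, attrs T, isNodeCover_attrs T, rfl⟩

lemma betaPlus_restrict_le_beta_ARplus {S : Finset Rule} {α : Finset (ℕ × Option ℕ)}
    (hα : α ∈ ESys S false) : betaPlus (restrict S α) ≤ beta_ARplus S := by
  refine le_csSup ⟨nPar S, ?_⟩ ⟨α, hα, rfl⟩
  rintro _ ⟨α', -, rfl⟩
  refine (Nat.sInf_le (s := {c | ∃ B, IsNodeCover _ B ∧ B.card = c})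
    ⟨_, isNodeCover_attrs _, rfl⟩).trans (Finset.card_le_card ?_)
  exact (attrs_mono (Finset.filter_subset _ _)).trans (attrs_restrict_subset S α')

namespace DGraph

variable {G : DGraph} {S : Finset Rule}

lemma pathEqs_nil : G.pathEqs [] = ∅ := rfl

lemma pathEqs_cons {v a : ℕ} {l : Option ℕ} (p : List (ℕ × Option ℕ))
    (hv : G.label v = Sum.inl a) : G.pathEqs ((v, l) :: p) = insert (a, l) (G.pathEqs p) := by
  simp [pathEqs, hv]

lemma card_pathEqs_le (p : List (ℕ × Option ℕ)) : (G.pathEqs p).card ≤ p.length :=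
  (List.toFinset_card_le _).trans (List.length_filterMap_le _ _)

lemma chainFrom.reflTransGen {v t : ℕ} {p : List (ℕ × Option ℕ)} (h : G.chainFrom v p t) :
    ∀ e ∈ p, Relation.ReflTransGen G.step v e.1 := by
  induction p generalizing v with
  | nil => simp
  | cons e p ih =>
    obtain ⟨rfl, w, hw, hchain⟩ := h
    simp only [List.forall_mem_cons]
    exact ⟨.refl, fun e' he' => .head ⟨_, hw⟩ (ih hchain e' he')⟩

lemma chainFrom.nodup (hacyc : G.Acyclic) {v t : ℕ} {p : List (ℕ × Option ℕ)}
    (h : G.chainFrom v p t) : (p.map Prod.fst).Nodup := by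
  induction p generalizing v with
  | nil => simp
  | cons e p ih =>
    obtain ⟨rfl, w, hw, hchain⟩ := h
    simp only [List.map_cons, List.nodup_cons, List.mem_map]
    refine ⟨?_, ih hchain⟩
    rintro ⟨e', he', hfst⟩
    exact hacyc e.1 (.head' ⟨_, hw⟩ (hfst ▸ hchain.reflTransGen e' he'))

lemma chainFrom.fst_lt (hDG : G.IsDG S false) {v t : ℕ} {p : List (ℕ × Option ℕ)}
    (h : G.chainFrom v p t) : ∀ e ∈ p, e.1 < G.n := by
  induction p generalizing v with
  | nil => simp
  | cons e p ih =>
    obtain ⟨rfl, w, hw, hchain⟩ := h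
    simp only [List.forall_mem_cons]
    exact ⟨(hDG.2.1 _ hw).1, ih hchain⟩

/-- A path of an acyclic graph visits each of its `n` nodes at most once. -/
lemma IsCompletePath.length_le (hDG : G.IsDG S false) {p : List (ℕ × Option ℕ)} {t : ℕ}
    (h : G.IsCompletePath p t) : p.length ≤ G.n := by
  rw [← List.length_map Prod.fst, ← List.toFinset_card_of_nodup (h.1.nodup hDG.2.2.1)]
  refine (Finset.card_le_card fun v hv => ?_).trans (Finset.card_range G.n).le
  obtain ⟨e, he, rfl⟩ := List.mem_map.1 (List.mem_toFinset.1 hv)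
  exact Finset.mem_range.2 (h.1.fst_lt hDG e he)

lemma IsCompletePath.length_le_depth (hDG : G.IsDG S false) {p : List (ℕ × Option ℕ)} {t : ℕ}
    (h : G.IsCompletePath p t) : p.length ≤ G.depth :=
  le_csSup ⟨G.n, by rintro _ ⟨p', t', h', rfl⟩; exact h'.length_le hDG⟩ ⟨p, t, h, rfl⟩

lemma exists_completePath_agrees (hDG : G.IsDG S false) {f : ℕ → ℕ}
    (hf : ∀ a ∈ attrs S, f a ∈ VS S a) :
    ∃ p t, G.IsCompletePath p t ∧ Agrees (G.pathEqs p) f := by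
  obtain ⟨hroot, hedges, hacyc, hnodes⟩ := hDG
  have hwf : WellFounded fun w v : Fin G.n => Relation.TransGen G.step v w :=
    @Finite.wellFounded_of_trans_of_irrefl _ _ _ ⟨fun _ _ _ h₁ h₂ => h₂.trans h₁⟩
      ⟨fun v => hacyc v⟩
  suffices ∀ v : Fin G.n, ∃ p t, G.chainFrom v p t ∧ G.IsTerminal t ∧ t < G.n ∧
      Agrees (G.pathEqs p) f by
    obtain ⟨p, t, hchain, hterm, ht, hag⟩ := this ⟨G.root, hroot⟩
    exact ⟨p, t, ⟨hchain, hterm, ht⟩, hag⟩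
  intro v
  induction v using hwf.induction with
  | _ v ih =>
  by_cases hterm : G.IsTerminal v
  · exact ⟨[], v, rfl, hterm, v.2, fun q hq => absurd hq (Finset.notMem_empty _)⟩
  have hnode := hnodes v v.2
  rw [if_neg hterm] at hnode
  obtain ⟨a, hlab, ha, hout, -⟩ := hnode
  obtain ⟨w, hw⟩ := (hout _).2 (mem_allowed_false.2 ⟨f a, hf a ha, rfl⟩)
  obtain ⟨p, t, hchain, hterm', ht, hag⟩ := ih ⟨w, (hedges _ hw).2⟩ (.single ⟨_, hw⟩)
  refine ⟨(v, some (f a)) :: p, t, ⟨rfl, w, hw, hchain⟩, hterm', ht, ?_⟩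
  rw [pathEqs_cons p hlab]
  exact (Finset.forall_mem_insert _ _ _).2 ⟨rfl, hag⟩

lemma SolvesAR.liftK_subset_or_conflict (hSolve : G.SolvesAR S) {p : List (ℕ × Option ℕ)}
    {t : ℕ} (hp : G.IsCompletePath p t) {f : ℕ → ℕ} (hag : Agrees (G.pathEqs p) f) {r : Rule}
    (hr : r ∈ S) (hwf : r.WF) :
    liftK r.K ⊆ G.pathEqs p ∨ ∃ q ∈ r.K, q.2 ≠ f q.1 ∧ (q.1, some (f q.1)) ∈ G.pathEqs p := by
  by_contra! h
  obtain ⟨hnsub, hagree⟩ := h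
  obtain ⟨hsub, hrest⟩ := hSolve p t hp hag.consistentE
  refine hnsub (hsub r (by_contra fun hrt => hrest r hr hrt ?_))
  refine hwf.consistentE_liftK.union hag.consistentE ?_
  simp only [liftK, Finset.forall_mem_image]
  intro q hq e he hqe
  obtain rfl : e = (q.1, some (f q.1)) := by rw [Prod.ext_iff, hag e he, hqe]; simp
  have : q.2 = f q.1 := by_contra fun hne => hagree q hq hne he
  rw [this]

lemma len_le_depth (hDG : G.IsDG S false) (hSolve : G.SolvesAR S) {r : Rule} (hr : r ∈ S)
    (hwf : r.WF) : r.len ≤ G.depth := by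
  obtain ⟨f, hfS, hfr⟩ := exists_agrees_of_mem_ESys (liftK_mem_ESys hr hwf)
  obtain ⟨p, t, hp, hag⟩ := exists_completePath_agrees hDG hfS
  have hsub : liftK r.K ⊆ G.pathEqs p := by
    refine (hSolve.liftK_subset_or_conflict hp hag hr hwf).resolve_right ?_
    rintro ⟨q, hq, hne, -⟩
    exact hne (Option.some_inj.1 (hfr _ (mem_liftK hq)))
  calc r.len = (liftK r.K).card := (card_liftK r.K).symm
    _ ≤ (G.pathEqs p).card := Finset.card_le_card hsub
    _ ≤ p.length := card_pathEqs_le p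
    _ ≤ G.depth := hp.length_le_depth hDG

lemma dPar_le_depth (hDG : G.IsDG S false) (hSolve : G.SolvesAR S) (hwf : ∀ r ∈ S, r.WF) :
    dPar S ≤ G.depth :=
  Finset.sup_le fun r hr => len_le_depth hDG hSolve hr (hwf r hr)

/-- The attributes queried on the path of an assignment extending `α` cover `G(S_α)`. -/
lemma beta_restrict_le_depth (hDG : G.IsDG S false) (hSolve : G.SolvesAR S)
    (hwf : ∀ r ∈ S, r.WF) {α : Finset (ℕ × Option ℕ)} (hα : α ∈ ESys S false) :
    beta (restrict S α) ≤ G.depth := by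
  obtain ⟨f, hfS, hfα⟩ := exists_agrees_of_mem_ESys hα
  obtain ⟨p, t, hp, hag⟩ := exists_completePath_agrees hDG hfS
  set P := (G.pathEqs p).image Prod.fst
  have hcover : IsNodeCover (restrict S α) (P ∩ attrs (restrict S α)) := by
    refine ⟨Finset.inter_subset_right, ?_⟩
    intro r' hr' hne
    obtain ⟨r, hr, rfl⟩ := Finset.mem_image.1 hr'
    have hrS := (Finset.mem_filter.1 hr).1
    suffices ∃ b ∈ (r.restrict α).attrs, b ∈ P from
      let ⟨b, hb, hbP⟩ := this
      ⟨b, Finset.mem_inter.2 ⟨hb, Finset.mem_inter.2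
        ⟨hbP, Finset.subset_biUnion_of_mem Rule.attrs hr' hb⟩⟩⟩
    rcases hSolve.liftK_subset_or_conflict hp hag hrS (hwf r hrS) with hsub | ⟨q, hq, hne, hqP⟩
    · obtain ⟨b, hb⟩ := hne
      obtain ⟨q, hq, rfl⟩ := Finset.mem_image.1 hb
      exact ⟨q.1, hb, Finset.mem_image_of_mem _ (hsub (mem_liftK (Finset.filter_subset _ _ hq)))⟩
    · refine ⟨q.1, Rule.mem_attrs_restrict hq fun hqα => hne ?_, Finset.mem_image_of_mem _ hqP⟩
      exact Option.some_inj.1 (hfα _ hqα)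
  calc beta (restrict S α) ≤ (P ∩ attrs (restrict S α)).card :=
        Nat.sInf_le ⟨_, hcover, rfl⟩
    _ ≤ P.card := Finset.card_le_card Finset.inter_subset_left
    _ ≤ (G.pathEqs p).card := Finset.card_image_le
    _ ≤ p.length := card_pathEqs_le p
    _ ≤ G.depth := hp.length_le_depth hDG

lemma beta_AR_le_depth (hDG : G.IsDG S false) (hSolve : G.SolvesAR S) (hwf : ∀ r ∈ S, r.WF) :
    beta_AR S ≤ G.depth :=
  csSup_le' <| by
    rintro _ ⟨α, hα, rfl⟩
    exact beta_restrict_le_depth hDG hSolve hwf hα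

end DGraph

/-- A decision tree as a term: `node a vals c` queries `a` and continues with `c δ` on the
answer `δ ∈ vals`. -/
inductive DecTree where
  | leaf : Finset Rule → DecTree
  | node : ℕ → Finset ℕ → (ℕ → DecTree) → DecTree

namespace DecTree

def depth : DecTree → ℕ
  | leaf _ => 0
  | node _ vals c => 1 + vals.sup fun δ => (c δ).depth

def subtree : DecTree → List ℕ → Option DecTree
  | t, [] => some t
  | leaf _, _ :: _ => none
  | node _ vals c, δ :: L => if δ ∈ vals then (c δ).subtree L else none

def positions : DecTree → Finset (List ℕ)
  | leaf _ => {[]}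
  | node _ vals c => insert [] (vals.biUnion fun δ => (c δ).positions.image (δ :: ·))

variable {t : DecTree} {L M : List ℕ} {v : ℕ}

lemma subtree_append (t : DecTree) (L M : List ℕ) :
    t.subtree (L ++ M) = (t.subtree L).bind (·.subtree M) := by
  induction L generalizing t with
  | nil => simp [subtree]
  | cons δ L ih =>
    cases t with
    | leaf Z => simp [subtree]
    | node a vals c => by_cases h : δ ∈ vals <;> simp [subtree, h, ih]

lemma mem_positions_iff : L ∈ t.positions ↔ (t.subtree L).isSome := by
  induction t generalizing L with
  | leaf Z => cases L <;> simp [positions, subtree]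
  | node a vals c ih =>
    cases L with
    | nil => simp [positions, subtree]
    | cons δ L => by_cases h : δ ∈ vals <;> simp [positions, subtree, h, ih]

lemma subtree_nil (t : DecTree) : t.subtree [] = some t := by
  cases t <;> rfl

lemma mem_positions_of_subtree {t' : DecTree} (h : t.subtree L = some t') : L ∈ t.positions := by
  simp [mem_positions_iff, h]

lemma nil_mem_positions : [] ∈ t.positions :=
  mem_positions_of_subtree (subtree_nil t)

lemma mem_positions_of_append (h : L ++ M ∈ t.positions) : L ∈ t.positions := by
  rw [mem_positions_iff, subtree_append] at h
  rw [mem_positions_iff]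
  cases hL : t.subtree L <;> simp_all

lemma snoc_notMem_positions_of_leaf {Z : Finset Rule} (hL : t.subtree L = some (leaf Z))
    (δ : ℕ) : L ++ [δ] ∉ t.positions := by
  simp [mem_positions_iff, subtree_append, hL, subtree]

lemma subtree_snoc_of_node {a : ℕ} {vals : Finset ℕ} {c : ℕ → DecTree}
    (hL : t.subtree L = some (node a vals c)) (δ : ℕ) :
    t.subtree (L ++ [δ]) = if δ ∈ vals then some (c δ) else none := by
  by_cases h : δ ∈ vals <;> simp [subtree_append, hL, subtree, h]

lemma snoc_mem_positions_iff_of_node {a : ℕ} {vals : Finset ℕ} {c : ℕ → DecTree}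
    (hL : t.subtree L = some (node a vals c)) (δ : ℕ) : L ++ [δ] ∈ t.positions ↔ δ ∈ vals := by
  by_cases h : δ ∈ vals <;> simp [mem_positions_iff, subtree_snoc_of_node hL, h]

def idx (t : DecTree) (L : List ℕ) : ℕ := t.positions.toList.idxOf L

def posOf (t : DecTree) (v : ℕ) : List ℕ := t.positions.toList.getD v []

lemma idx_lt (h : L ∈ t.positions) : t.idx L < t.positions.card := by
  rw [← Finset.length_toList]
  exact List.idxOf_lt_length_iff.2 (Finset.mem_toList.2 h)

lemma posOf_idx (h : L ∈ t.positions) : t.posOf (t.idx L) = L := by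
  have := idx_lt h
  rw [← Finset.length_toList] at this
  rw [posOf, List.getD_eq_getElem _ _ this]
  exact List.getElem_idxOf this

lemma posOf_mem (h : v < t.positions.card) : t.posOf v ∈ t.positions := by
  rw [← Finset.length_toList] at h
  rw [posOf, List.getD_eq_getElem _ _ h, ← Finset.mem_toList]
  exact List.getElem_mem h

lemma idx_posOf (h : v < t.positions.card) : t.idx (t.posOf v) = v := by
  rw [← Finset.length_toList] at h
  rw [idx, posOf, List.getD_eq_getElem _ _ h]
  exact (Finset.nodup_toList _).idxOf_getElem v h

lemma eq_of_idx_eq (hL : L ∈ t.positions) (hM : M ∈ t.positions) (h : t.idx L = t.idx M) :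
    L = M := by
  rw [← posOf_idx hL, ← posOf_idx hM, h]

def labelAt (t : DecTree) (L : List ℕ) : ℕ ⊕ Finset Rule :=
  match t.subtree L with
  | some (leaf Z) => Sum.inr Z
  | some (node a _ _) => Sum.inl a
  | none => Sum.inr ∅

/-- The nodes are the positions of `t`, numbered by `idx`; the edge labeled `δ` leads from `L`
to `L ++ [δ]`. -/
def toDGraph (t : DecTree) : DGraph where
  n := t.positions.card
  root := t.idx []
  label v := t.labelAt (t.posOf v)
  edges := (t.positions.filter (· ≠ [])).image fun L =>
    (t.idx L.dropLast, some (L.getLastD 0), t.idx L)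

lemma label_toDGraph_idx_of_leaf {Z : Finset Rule} (hL : t.subtree L = some (leaf Z)) :
    t.toDGraph.label (t.idx L) = Sum.inr Z := by
  simp only [toDGraph, posOf_idx (mem_positions_of_subtree hL), labelAt, hL]

lemma label_toDGraph_idx_of_node {a : ℕ} {vals : Finset ℕ} {c : ℕ → DecTree}
    (hL : t.subtree L = some (node a vals c)) : t.toDGraph.label (t.idx L) = Sum.inl a := by
  simp only [toDGraph, posOf_idx (mem_positions_of_subtree hL), labelAt, hL]

lemma mem_edges_toDGraph {u w : ℕ} {l : Option ℕ} :
    (u, l, w) ∈ t.toDGraph.edges ↔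
      ∃ L δ, L ++ [δ] ∈ t.positions ∧ u = t.idx L ∧ l = some δ ∧ w = t.idx (L ++ [δ]) := by
  simp only [toDGraph, Finset.mem_image, Finset.mem_filter, Prod.mk.injEq]
  constructor
  · rintro ⟨L', ⟨hL', hne⟩, rfl, rfl, rfl⟩
    obtain ⟨L, δ, rfl⟩ := (List.eq_nil_or_concat L').resolve_left hne
    exact ⟨L, δ, by simpa using hL', by simp⟩
  · rintro ⟨L, δ, hLδ, rfl, rfl, rfl⟩
    exact ⟨L ++ [δ], ⟨hLδ, by simp⟩, by simp⟩

lemma mem_edges_toDGraph_of_mem (hL : L ∈ t.positions) {l : Option ℕ} {w : ℕ} :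
    (t.idx L, l, w) ∈ t.toDGraph.edges ↔
      ∃ δ, L ++ [δ] ∈ t.positions ∧ l = some δ ∧ w = t.idx (L ++ [δ]) := by
  rw [mem_edges_toDGraph]
  constructor
  · rintro ⟨M, δ, hMδ, hLM, hl, hw⟩
    obtain rfl := eq_of_idx_eq hL (mem_positions_of_append hMδ) hLM
    exact ⟨δ, hMδ, hl, hw⟩
  · rintro ⟨δ, hLδ, hl, hw⟩
    exact ⟨L, δ, hLδ, rfl, hl, hw⟩

lemma mem_edges_toDGraph_of_lt (hv : v < t.positions.card) {l : Option ℕ} {w : ℕ} :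
    (v, l, w) ∈ t.toDGraph.edges ↔
      ∃ δ, t.posOf v ++ [δ] ∈ t.positions ∧ l = some δ ∧ w = t.idx (t.posOf v ++ [δ]) := by
  conv_lhs => rw [← idx_posOf hv]
  exact mem_edges_toDGraph_of_mem (posOf_mem hv)

lemma toDGraph_acyclic (t : DecTree) : t.toDGraph.Acyclic := by
  have hstep : ∀ u w, t.toDGraph.step u w → (t.posOf u).length < (t.posOf w).length := by
    rintro u w ⟨l, he⟩
    obtain ⟨L, δ, hLδ, rfl, -, rfl⟩ := mem_edges_toDGraph.1 he
    rw [posOf_idx (mem_positions_of_append hLδ), posOf_idx hLδ]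
    simp
  intro v hv
  have : ∀ u w, Relation.TransGen t.toDGraph.step u w →
      (t.posOf u).length < (t.posOf w).length := fun u w h =>
    h.trans_induction_on (hstep _ _) fun _ _ h₁ h₂ => h₁.trans h₂
  exact lt_irrefl _ (this v v hv)

lemma toDGraph_isTree (t : DecTree) : t.toDGraph.IsTree := by
  refine ⟨?_, fun v hv hroot => ?_⟩
  · rintro ⟨u, l, w⟩ he (hw : w = t.idx [])
    obtain ⟨L, δ, hLδ, -, -, rfl⟩ := mem_edges_toDGraph.1 he
    simpa using eq_of_idx_eq hLδ nil_mem_positions hw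
  · have hv' := posOf_mem hv
    have hne : t.posOf v ≠ [] := fun h => hroot (by rw [← idx_posOf hv, h]; rfl)
    obtain ⟨M, x, hMx⟩ := (List.eq_nil_or_concat _).resolve_left hne
    rw [List.concat_eq_append] at hMx
    refine ⟨(t.idx M, some x, v), ⟨?_, rfl⟩, ?_⟩
    · exact mem_edges_toDGraph.2 ⟨M, x, hMx ▸ hv', rfl, rfl, by rw [← hMx, idx_posOf hv]⟩
    · rintro ⟨u, l, w⟩ ⟨he, rfl : w = v⟩
      obtain ⟨L, δ, hLδ, rfl, rfl, hw⟩ := mem_edges_toDGraph.1 he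
      have : L ++ [δ] = M ++ [x] := by
        rw [← hMx]
        exact eq_of_idx_eq hLδ hv' (by rw [← hw, idx_posOf hv])
      obtain ⟨rfl, hδx⟩ := List.append_inj' this rfl
      rw [List.singleton_inj.1 hδx]

end DecTree

/-- `SolvesFrom S E t`: the tree `t` solves `AR(S)` on inputs already known to satisfy the
equations `E` (those collected on the way to `t` from the root of a larger tree). -/
inductive SolvesFrom (S : Finset Rule) : Finset (ℕ × Option ℕ) → DecTree → Prop
  | leaf {E Z} : Z ⊆ S →
      (ConsistentE E → (∀ r ∈ Z, liftK r.K ⊆ E) ∧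
        ∀ r ∈ S, r ∉ Z → ¬ConsistentE (liftK r.K ∪ E)) →
      SolvesFrom S E (.leaf Z)
  | node {E a c} : a ∈ attrs S → (∀ δ ∈ VS S a, SolvesFrom S (insert (a, some δ) E) (c δ)) →
      SolvesFrom S E (.node a (VS S a) c)

namespace SolvesFrom

open DecTree

variable {S : Finset Rule} {E : Finset (ℕ × Option ℕ)} {t : DecTree}

lemma of_subtree (h : SolvesFrom S E t) {L : List ℕ} {t' : DecTree} (hL : t.subtree L = some t') :
    ∃ E', SolvesFrom S E' t' := by
  induction L generalizing t E with
  | nil =>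
    rw [subtree_nil, Option.some_inj] at hL
    exact ⟨E, hL ▸ h⟩
  | cons δ L ih =>
    cases h with
    | leaf => simp [DecTree.subtree] at hL
    | @node E a c ha hc =>
      by_cases hδ : δ ∈ VS S a
      · simp only [DecTree.subtree, if_pos hδ] at hL
        exact ih (hc δ hδ) hL
      · simp [DecTree.subtree, hδ] at hL

lemma toDGraph_isDG (h : SolvesFrom S ∅ t) : t.toDGraph.IsDG S false := by
  refine ⟨idx_lt nil_mem_positions, ?_, toDGraph_acyclic t, fun v hv => ?_⟩
  · rintro ⟨u, l, w⟩ he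
    obtain ⟨L, δ, hLδ, rfl, -, rfl⟩ := mem_edges_toDGraph.1 he
    exact ⟨idx_lt (mem_positions_of_append hLδ), idx_lt hLδ⟩
  have hL := posOf_mem hv
  obtain ⟨t', hsub⟩ := Option.isSome_iff_exists.1 (mem_positions_iff.1 hL)
  obtain ⟨E, hE⟩ := h.of_subtree hsub
  have hlabel : t.toDGraph.label v = t.labelAt (t.posOf v) := rfl
  cases hE with
  | @leaf E Z hZ _ =>
    have hterm : t.toDGraph.IsTerminal v := by
      rintro ⟨u, l, w⟩ he (rfl : u = v)
      obtain ⟨δ, hLδ, -⟩ := (mem_edges_toDGraph_of_lt hv).1 he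
      exact snoc_notMem_positions_of_leaf hsub δ hLδ
    rw [if_pos hterm]
    exact ⟨Z, by rw [hlabel, labelAt, hsub], hZ⟩
  | @node E a c ha _ =>
    have hedge : ∀ l, (∃ w, (v, l, w) ∈ t.toDGraph.edges) ↔ l ∈ allowed S false a := by
      intro l
      simp only [mem_edges_toDGraph_of_lt hv, snoc_mem_positions_iff_of_node hsub,
        mem_allowed_false]
      constructor
      · rintro ⟨_, δ, hδ, rfl, -⟩
        exact ⟨δ, hδ, rfl⟩
      · rintro ⟨δ, hδ, rfl⟩
        exact ⟨_, δ, hδ, rfl, rfl⟩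
    have hterm : ¬t.toDGraph.IsTerminal v := by
      obtain ⟨δ, hδ⟩ := VS_nonempty ha
      obtain ⟨w, hw⟩ := (hedge _).2 (mem_allowed_false.2 ⟨δ, hδ, rfl⟩)
      exact fun hterm => hterm _ hw rfl
    rw [if_neg hterm]
    refine ⟨a, by rw [hlabel, labelAt, hsub], ha, hedge, fun l w w' he he' => ?_⟩
    obtain ⟨δ, -, rfl, rfl⟩ := (mem_edges_toDGraph_of_lt hv).1 he
    obtain ⟨δ', -, hδδ', rfl⟩ := (mem_edges_toDGraph_of_lt hv).1 he'
    rw [Option.some_inj.1 hδδ']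

lemma of_chainFrom {t' : DecTree} (h : SolvesFrom S E t') {L : List ℕ} (hL : t.subtree L = some t')
    {p : List (ℕ × Option ℕ)} {tend : ℕ} (hchain : t.toDGraph.chainFrom (t.idx L) p tend)
    (hterm : t.toDGraph.IsTerminal tend) :
    p.length ≤ t'.depth ∧
      SolvesFrom S (E ∪ t.toDGraph.pathEqs p) (.leaf (t.toDGraph.termSet tend)) := by
  induction p generalizing L E t' with
  | nil =>
    obtain rfl : t.idx L = tend := hchain
    cases h with
    | @leaf E Z hZ hcond =>
      rw [DGraph.termSet, label_toDGraph_idx_of_leaf hL, DGraph.pathEqs_nil, Finset.union_empty]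
      exact ⟨le_rfl, .leaf hZ hcond⟩
    | @node E a c ha _ =>
      obtain ⟨δ, hδ⟩ := VS_nonempty ha
      exact absurd rfl (hterm _ ((mem_edges_toDGraph_of_mem (mem_positions_of_subtree hL)).2
        ⟨δ, (snoc_mem_positions_iff_of_node hL δ).2 hδ, rfl, rfl⟩))
  | cons e p ih =>
    obtain ⟨v, l⟩ := e
    obtain ⟨rfl, w, hw, hchain⟩ := hchain
    obtain ⟨δ, hLδ, rfl, rfl⟩ := (mem_edges_toDGraph_of_mem (mem_positions_of_subtree hL)).1 hw
    cases h with
    | leaf => exact absurd hLδ (snoc_notMem_positions_of_leaf hL δ)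
    | @node E a c ha hc =>
      have hδ := (snoc_mem_positions_iff_of_node hL δ).1 hLδ
      obtain ⟨hlen, hsolves⟩ :=
        ih (hc δ hδ) (by simp [subtree_snoc_of_node hL, hδ]) hchain
      rw [DGraph.pathEqs_cons p (label_toDGraph_idx_of_node hL), Finset.union_insert,
        ← Finset.insert_union]
      refine ⟨?_, hsolves⟩
      have := Finset.le_sup (f := fun δ => (c δ).depth) hδ
      simp only [List.length_cons, DecTree.depth]
      omega

lemma toDGraph_solvesAR (h : SolvesFrom S ∅ t) : t.toDGraph.SolvesAR S := by
  intro p tend hp hcons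
  have := (h.of_chainFrom (subtree_nil t) hp.1 hp.2.1).2
  rw [Finset.empty_union] at this
  cases this with
  | leaf _ hcond => exact hcond hcons

lemma depth_toDGraph_le (h : SolvesFrom S ∅ t) : t.toDGraph.depth ≤ t.depth :=
  csSup_le' <| by
    rintro _ ⟨p, tend, hp, rfl⟩
    exact (h.of_chainFrom (subtree_nil t) hp.1 hp.2.1).1

lemma treeSolvesAR (h : SolvesFrom S ∅ t) : TreeSolvesAR S t.toDGraph :=
  ⟨h.toDGraph_isDG, toDGraph_isTree t, h.toDGraph_solvesAR⟩

end SolvesFrom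

lemma solvesFrom_leaf {S : Finset Rule} {α : Finset (ℕ × Option ℕ)}
    (h0 : dPar (restrict S α) = 0) :
    SolvesFrom S α (.leaf (S.filter fun r => ConsistentE (liftK r.K ∪ α))) := by
  refine .leaf (Finset.filter_subset _ _) fun _ => ⟨?_, fun r hr hrZ hcons =>
    hrZ (Finset.mem_filter.2 ⟨hr, hcons⟩)⟩
  intro r hrZ
  obtain ⟨hr, hcons⟩ := Finset.mem_filter.1 hrZ
  have hempty : (r.restrict α).K = ∅ :=
    Finset.card_eq_zero.1 (Nat.le_zero.1 (h0 ▸ len_restrict_le_dPar hr hcons))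
  simp only [liftK, Finset.image_subset_iff]
  intro q hq
  by_contra hqα
  have : q ∈ (r.restrict α).K := Finset.mem_filter.2 ⟨hq, hqα⟩
  simp [hempty] at this

lemma exists_solvesFrom_query {S : Finset Rule} {D : ℕ} (B : Finset ℕ) (hB : B ⊆ attrs S)
    {α : Finset (ℕ × Option ℕ)} (hα : α ∈ ESys S false)
    (cont : ∀ α' ∈ ESys S false, α ⊆ α' → (∀ b ∈ B, ∃ δ, (b, some δ) ∈ α') →
      ∃ τ, SolvesFrom S α' τ ∧ τ.depth ≤ D) :
    ∃ τ, SolvesFrom S α τ ∧ τ.depth ≤ B.card + D := by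
  induction B using Finset.induction_on generalizing α with
  | empty => simpa using cont α hα subset_rfl (by simp)
  | insert b B hbB ih =>
    have hbS := hB (Finset.mem_insert_self b B)
    have hBS := (Finset.subset_insert b B).trans hB
    rw [Finset.card_insert_of_notMem hbB]
    by_cases hknown : ∃ δ, (b, some δ) ∈ α
    · obtain ⟨τ, hτ, hdepth⟩ := ih hBS hα fun α' hα' hsub hB' =>
        cont α' hα' hsub ((Finset.forall_mem_insert _ _ _).2 ⟨hknown.imp fun _ h => hsub h, hB'⟩)
      exact ⟨τ, hτ, by omega⟩
    push Not at hknown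
    have hchild : ∀ δ ∈ VS S b, ∃ τ, SolvesFrom S (insert (b, some δ) α) τ ∧
        τ.depth ≤ B.card + D := fun δ hδ =>
      ih hBS (insert_mem_ESys hα hbS hδ hknown) fun α' hα' hsub hB' =>
        cont α' hα' ((Finset.subset_insert _ _).trans hsub)
          ((Finset.forall_mem_insert _ _ _).2 ⟨⟨δ, hsub (Finset.mem_insert_self _ _)⟩, hB'⟩)
    have : Nonempty DecTree := ⟨.leaf ∅⟩
    choose! c hc hcd using hchild
    refine ⟨.node b (VS S b) c, .node hbS hc, ?_⟩
    have := Finset.sup_le hcd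
    simp only [DecTree.depth]
    omega

/-- Every rule of maximum length in `S_α` loses an equation on the cover `B`. -/
lemma dPar_restrict_lt {S : Finset Rule} {α α' : Finset (ℕ × Option ℕ)} {B : Finset ℕ}
    (hB : IsNodeCover (Splus (restrict S α)) B) (hsub : α ⊆ α')
    (hBα' : ∀ b ∈ B, ∃ δ, (b, some δ) ∈ α') (h0 : 0 < dPar (restrict S α)) :
    dPar (restrict S α') < dPar (restrict S α) := by
  rw [dPar]
  refine (Finset.sup_lt_iff h0).2 fun r' hr' => ?_
  obtain ⟨r, hr, rfl⟩ := Finset.mem_image.1 hr'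
  obtain ⟨hrS, hcons'⟩ := Finset.mem_filter.1 hr
  have hcons := hcons'.mono (Finset.union_subset_union_right hsub)
  have hKsub : (r.restrict α').K ⊆ (r.restrict α).K :=
    Finset.monotone_filter_right _ fun q _ hq h => hq (hsub h)
  have hle := len_restrict_le_dPar hrS hcons
  rcases hle.lt_or_eq with hlt | heq
  · exact (Finset.card_le_card hKsub).trans_lt hlt
  have hplus : r.restrict α ∈ Splus (restrict S α) :=
    Finset.mem_filter.2 ⟨Finset.mem_image_of_mem _ (Finset.mem_filter.2 ⟨hrS, hcons⟩), heq⟩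
  have hne : (r.restrict α).attrs.Nonempty :=
    (Finset.card_pos.1 (heq ▸ h0 : 0 < (r.restrict α).len)).image _
  obtain ⟨b, hb⟩ := hB.2 _ hplus hne
  obtain ⟨q, hq, rfl⟩ := Finset.mem_image.1 (Finset.mem_inter.1 hb).1
  obtain ⟨δ, hδ⟩ := hBα' _ (Finset.mem_inter.1 hb).2
  have hqα' : (q.1, some q.2) ∈ α' := by
    have := hcons' _ (Finset.mem_union_left _ (mem_liftK (Finset.filter_subset _ _ hq)))
      _ (Finset.mem_union_right _ hδ) rfl
    rwa [show δ = q.2 from (Option.some_inj.1 this).symm] at hδ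
  rw [← heq]
  exact Finset.card_lt_card ⟨hKsub, fun h => (Finset.mem_filter.1 (h hq)).2 hqα'⟩

lemma exists_solvesFrom_depth_le {S : Finset Rule} {β : ℕ}
    (hβ : ∀ α ∈ ESys S false, betaPlus (restrict S α) ≤ β) (k : ℕ) :
    ∀ α ∈ ESys S false, dPar (restrict S α) ≤ k → ∃ τ, SolvesFrom S α τ ∧ τ.depth ≤ k * β := by
  induction k with
  | zero => exact fun α _ hd => ⟨_, solvesFrom_leaf (Nat.le_zero.1 hd), by simp [DecTree.depth]⟩
  | succ k ih =>
    intro α hα hd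
    rcases Nat.eq_zero_or_pos (dPar (restrict S α)) with h0 | h0
    · exact ⟨_, solvesFrom_leaf h0, by simp [DecTree.depth]⟩
    obtain ⟨B, hB, hcard⟩ := exists_isNodeCover_card_eq_beta (Splus (restrict S α))
    have hBS : B ⊆ attrs S :=
      hB.1.trans ((attrs_mono (Finset.filter_subset _ _)).trans (attrs_restrict_subset S α))
    obtain ⟨τ, hτ, hdepth⟩ := exists_solvesFrom_query B hBS hα fun α' hα' hsub hBα' =>
      ih α' hα' (Nat.lt_succ_iff.1 ((dPar_restrict_lt hB hsub hBα' h0).trans_le hd))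
    refine ⟨τ, hτ, hdepth.trans ?_⟩
    calc B.card + k * β ≤ β + k * β := by rw [hcard]; gcongr; exact hβ α hα
      _ = (k + 1) * β := by ring

lemma exists_treeSolvesAR_depth_le (S : Finset Rule) :
    ∃ G, TreeSolvesAR S G ∧ G.depth ≤ dPar S * beta_ARplus S := by
  obtain ⟨τ, hτ, hdepth⟩ := exists_solvesFrom_depth_le
    (fun _ hα => betaPlus_restrict_le_beta_ARplus hα) (dPar S) ∅ (empty_mem_ESys S)
    (dPar_restrict_empty_le S)
  exact ⟨τ.toDGraph, hτ.treeSolvesAR, hτ.depth_toDGraph_le.trans hdepth⟩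

theorem statement_15_general (S : Finset Rule) (hwf : ∀ r ∈ S, r.WF) :
    max (dPar S) (beta_AR S) ≤ h_AR S ∧ h_AR S ≤ dPar S * beta_ARplus S := by
  obtain ⟨G, hG, hdepth⟩ := exists_treeSolvesAR_depth_le S
  have hG' : G.depth ∈ {m | ∃ G : DGraph, TreeSolvesAR S G ∧ G.depth = m} := ⟨G, hG, rfl⟩
  obtain ⟨G₀, ⟨hDG, -, hsolves⟩, hG₀⟩ := Nat.sInf_mem ⟨_, hG'⟩
  rw [h_AR]
  refine ⟨?_, (Nat.sInf_le hG').trans hdepth⟩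
  rw [← hG₀]
  exact max_le (DGraph.dPar_le_depth hDG hsolves hwf) (DGraph.beta_AR_le_depth hDG hsolves hwf)

/-- Theorem 4(a): max{d(S), β_AR(S)} ≤ h_AR(S) ≤ d(S)·β_AR⁺(S). -/
theorem statement_15 (S : Finset Rule) (hS : S.Nonempty) (hwf : ∀ r ∈ S, r.WF)
    (hn : 0 < nPar S) :
    max (dPar S) (beta_AR S) ≤ h_AR S ∧ h_AR S ≤ dPar S * beta_ARplus S :=
  statement_15_general S hwf

end DRS

end
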